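/- Let A ∈ ℝ^{n×p} have nonzero columns a₁, …, a_p, let R ∈ ℝ^{n×n} be symmetric positive definite, Q = R⁻¹, x ∈ ℝ^p with x ≥ 0, I ⊆ {1, …, p}, and γ > 0. Set y := ∑_{i=1}^p x_i a_i/‖a_i‖_Q and z := ∑_{i∈I} x_i a_i/‖a_i‖_Q, and assume z ≠ 0 and ‖y‖_Q ≤ γ‖z‖_Q. Define R′ := (1/(1+3γ²))(R + 3 z zᵀ/‖z‖_Q²), which is symmetric positive definite, and Q′ := (R′)⁻¹. Then for every v ∈ ℝⁿ there exists μ ∈ ℝ^p with μ ≥ 0 such that ‖v + Aμ‖_Q ≤ ‖v‖_{Q′}. -/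

import Mathlib

/-!
Write `Q' = R'⁻¹`. By the Sherman–Morrison formula
`‖v‖²_{Q'} = (1 + 3γ²)(‖v‖²_Q - ¾ ⟨v, z⟩²_Q / ‖z‖²_Q)`, and for `μ ≥ 0` the vector `Aμ` reaches
every nonnegative combination of `z` and `y - z`. In the Euclidean geometry of `⟨·, ·⟩_Q`: if
`⟨v, y - z⟩ < 0`, remove from `v` its component along `y - z`; if `⟨v, z⟩ ≤ 0`, its component
along `z`; otherwise take `μ = 0`, where `0 < ⟨v, z⟩ ≤ ⟨v, y⟩ ≤ γ ‖v‖ ‖z‖` gives the bound.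
Both projections are instances of one estimate: if `P` is the orthogonal projection onto `K⊥` and
`‖P z‖ ≤ γ ‖z‖`, then `‖P v‖² ≤ (1 + 3γ²)(‖v‖² - ¾ ⟨v, z⟩² / ‖z‖²)`. For `K = ℝ (y - z)` the
hypothesis holds because `P z = P y`. The estimate itself is a weighted Cauchy–Schwarz inequality
for `⟨v, z⟩ = ⟨(1 - P) v, (1 - P) z⟩ + ⟨P v, P z⟩`.
-/

open Matrix

noncomputable section

/-- `‖v‖_Q = √(vᵀ Q v)`, the norm induced by a symmetric positive definite `Q`. -/
noncomputable def Qnorm {n : ℕ} (Q : Matrix (Fin n) (Fin n) ℝ) (v : Fin n → ℝ) : ℝ :=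
  Real.sqrt (v ⬝ᵥ Q.mulVec v)

/-- The rank-1 rescaled matrix `R' = (1/(1+3γ²)) (R + 3 z zᵀ/‖z‖_Q²)`, where
`Q = R⁻¹`. -/
noncomputable def rescaledRankOne {n : ℕ} (R : Matrix (Fin n) (Fin n) ℝ)
    (γ : ℝ) (z : Fin n → ℝ) : Matrix (Fin n) (Fin n) ℝ :=
  (1 + 3 * γ ^ 2)⁻¹ • (R + (3 / (Qnorm R⁻¹ z) ^ 2) • vecMulVec z z)

open InnerProductSpace Submodule

lemma le_rescaled_of_sq_le {γ V Z s : ℝ} (hZ : 0 < Z) (hs : s ^ 2 ≤ V * Z)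
    (hsγ : s ^ 2 ≤ γ ^ 2 * (V * Z)) :
    V ≤ (1 + 3 * γ ^ 2) * (V - 3 / 4 * s ^ 2 / Z) := by
  rw [show V - 3 / 4 * s ^ 2 / Z = (4 * Z * V - 3 * s ^ 2) / (4 * Z) by field_simp,
    mul_div_assoc', le_div_iff₀ (by positivity)]
  nlinarith

lemma le_rescaled_of_split {γ B C E F m t : ℝ} (hB : 0 ≤ B) (hC : 0 ≤ C) (hE : 0 ≤ E)
    (hF : 0 ≤ F) (hm : m ^ 2 ≤ B * C) (ht : t ^ 2 ≤ E * F) (hFγ : F ≤ γ ^ 2 * (C + F))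
    (hZ : 0 < C + F) :
    E ≤ (1 + 3 * γ ^ 2) * (B + E - 3 / 4 * (m + t) ^ 2 / (C + F)) := by
  set Z := C + F with hZdef
  have hZF : 0 < Z + 3 * F := by linarith
  -- weighted Cauchy–Schwarz `(m + t)² ≤ 4Z/(3C) m² + 4Z/(Z + 3F) t²`, cleared of denominators
  have hs : 3 * (Z + 3 * F) * (m + t) ^ 2 ≤ 4 * Z * (Z + 3 * F) * B + 12 * Z * E * F := by
    rcases hC.eq_or_lt with rfl | hC
    · obtain rfl : m = 0 := by nlinarith
      rw [hZdef, zero_add]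
      nlinarith [mul_le_mul_of_nonneg_left ht hF, mul_nonneg (mul_nonneg hF hF) hB]
    · have : C * (4 * Z * (Z + 3 * F) * B + 12 * Z * t ^ 2 - 3 * (Z + 3 * F) * (m + t) ^ 2) =
          ((Z + 3 * F) * m - 3 * C * t) ^ 2 + 4 * Z * (Z + 3 * F) * (B * C - m ^ 2) := by
        rw [hZdef]; ring
      nlinarith [sq_nonneg ((Z + 3 * F) * m - 3 * C * t), mul_le_mul_of_nonneg_left ht hZ.le,
        mul_nonneg (mul_nonneg hZ.le hZF.le) (sub_nonneg.2 hm)]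
  have hZE : (Z + 3 * F) * E ≤ (1 + 3 * γ ^ 2) * Z * E := by nlinarith
  rw [show B + E - 3 / 4 * (m + t) ^ 2 / Z = (4 * Z * (B + E) - 3 * (m + t) ^ 2) / (4 * Z) by
    field_simp, mul_div_assoc', le_div_iff₀ (by positivity)]
  refine le_of_mul_le_mul_left ?_ hZF
  nlinarith [mul_le_mul_of_nonneg_left hs (by positivity : (0 : ℝ) ≤ 1 + 3 * γ ^ 2),
    mul_le_mul_of_nonneg_left hZE hZ.le]

section InnerProductSpace

variable {E : Type*} [NormedAddCommGroup E] [InnerProductSpace ℝ E]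

lemma starProjection_orthogonal_singleton (d v : E) :
    (ℝ ∙ d)ᗮ.starProjection v = v - (⟪d, v⟫_ℝ / ‖d‖ ^ 2) • d := by
  rw [starProjection_orthogonal_val, starProjection_singleton]
  rfl

lemma real_inner_sq_le_norm_sq_mul_norm_sq (x y : E) : ⟪x, y⟫_ℝ ^ 2 ≤ ‖x‖ ^ 2 * ‖y‖ ^ 2 := by
  rw [← mul_pow, ← sq_abs]
  exact pow_le_pow_left₀ (abs_nonneg _) (abs_real_inner_le_norm x y) 2

theorem norm_sq_starProjection_orthogonal_le (K : Submodule ℝ E) [K.HasOrthogonalProjection]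
    {γ : ℝ} {v z : E} (hz : z ≠ 0) (hKz : ‖Kᗮ.starProjection z‖ ≤ γ * ‖z‖) :
    ‖Kᗮ.starProjection v‖ ^ 2 ≤ (1 + 3 * γ ^ 2) * (‖v‖ ^ 2 - 3 / 4 * ⟪v, z⟫_ℝ ^ 2 / ‖z‖ ^ 2) := by
  have hinner : ⟪v, z⟫_ℝ = ⟪K.starProjection v, K.starProjection z⟫_ℝ +
      ⟪Kᗮ.starProjection v, Kᗮ.starProjection z⟫_ℝ := by
    conv_lhs => rw [← K.starProjection_add_starProjection_orthogonal v,
      ← K.starProjection_add_starProjection_orthogonal z]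
    simp only [inner_add_left, inner_add_right,
      K.inner_right_of_mem_orthogonal (K.starProjection_apply_mem _)
        (Kᗮ.starProjection_apply_mem _),
      K.inner_left_of_mem_orthogonal (K.starProjection_apply_mem _)
        (Kᗮ.starProjection_apply_mem _)]
    ring
  rw [norm_sq_eq_add_norm_sq_starProjection v K, norm_sq_eq_add_norm_sq_starProjection z K, hinner]
  refine le_rescaled_of_split (by positivity) (by positivity) (by positivity) (by positivity)
    (real_inner_sq_le_norm_sq_mul_norm_sq _ _) (real_inner_sq_le_norm_sq_mul_norm_sq _ _) ?_ ?_
  · rw [← norm_sq_eq_add_norm_sq_starProjection z K, ← mul_pow]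
    exact pow_le_pow_left₀ (norm_nonneg _) hKz 2
  · rw [← norm_sq_eq_add_norm_sq_starProjection z K]
    positivity

theorem exists_nonneg_norm_add_sq_le {γ : ℝ} {v y z : E} (hz : z ≠ 0)
    (hy : ‖y‖ ≤ γ * ‖z‖) :
    ∃ a b : ℝ, 0 ≤ a ∧ 0 ≤ b ∧ ‖v + (a • (y - z) + b • z)‖ ^ 2 ≤
      (1 + 3 * γ ^ 2) * (‖v‖ ^ 2 - 3 / 4 * ⟪v, z⟫_ℝ ^ 2 / ‖z‖ ^ 2) := by
  have hz' : 0 < ‖z‖ := norm_pos_iff.2 hz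
  rcases lt_or_ge ⟪y - z, v⟫_ℝ 0 with hd | hd
  · refine ⟨-(⟪y - z, v⟫_ℝ / ‖y - z‖ ^ 2), 0,
      neg_nonneg.2 (div_nonpos_of_nonpos_of_nonneg hd.le (by positivity)), le_rfl, ?_⟩
    have hproj : v + (-(⟪y - z, v⟫_ℝ / ‖y - z‖ ^ 2) • (y - z) + (0 : ℝ) • z) =
        (ℝ ∙ (y - z))ᗮ.starProjection v := by
      rw [starProjection_orthogonal_singleton]
      module
    rw [hproj]
    refine norm_sq_starProjection_orthogonal_le _ hz ?_
    have hyz : (ℝ ∙ (y - z))ᗮ.starProjection z = (ℝ ∙ (y - z))ᗮ.starProjection y := by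
      have := starProjection_orthogonalComplement_singleton_eq_zero (𝕜 := ℝ) (y - z)
      rwa [map_sub, sub_eq_zero, eq_comm] at this
    rw [hyz]
    exact (norm_starProjection_apply_le _ y).trans hy
  rcases le_or_gt ⟪z, v⟫_ℝ 0 with hs | hs
  · refine ⟨0, -(⟪z, v⟫_ℝ / ‖z‖ ^ 2), le_rfl,
      neg_nonneg.2 (div_nonpos_of_nonpos_of_nonneg hs (by positivity)), ?_⟩
    have hproj : v + ((0 : ℝ) • (y - z) + -(⟪z, v⟫_ℝ / ‖z‖ ^ 2) • z) =
        (ℝ ∙ z)ᗮ.starProjection v := by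
      rw [starProjection_orthogonal_singleton]
      module
    rw [hproj]
    refine norm_sq_starProjection_orthogonal_le _ hz ?_
    rw [starProjection_orthogonalComplement_singleton_eq_zero, norm_zero]
    exact mul_nonneg (nonneg_of_mul_nonneg_left ((norm_nonneg y).trans hy) hz') hz'.le
  · refine ⟨0, 0, le_rfl, le_rfl, ?_⟩
    simp only [zero_smul, add_zero]
    refine le_rescaled_of_sq_le (by positivity) (real_inner_sq_le_norm_sq_mul_norm_sq v z) ?_
    have hvy : ⟪v, z⟫_ℝ ≤ γ * (‖v‖ * ‖z‖) := by
      rw [inner_sub_left, sub_nonneg, real_inner_comm v z, real_inner_comm v y] at hd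
      calc ⟪v, z⟫_ℝ ≤ ⟪v, y⟫_ℝ := hd
        _ ≤ ‖v‖ * ‖y‖ := real_inner_le_norm v y
        _ ≤ ‖v‖ * (γ * ‖z‖) := by gcongr
        _ = γ * (‖v‖ * ‖z‖) := by ring
    rw [real_inner_comm v z] at hs
    calc ⟪v, z⟫_ℝ ^ 2 ≤ (γ * (‖v‖ * ‖z‖)) ^ 2 := pow_le_pow_left₀ hs.le hvy 2
      _ = γ ^ 2 * (‖v‖ ^ 2 * ‖z‖ ^ 2) := by ring

end InnerProductSpace

theorem Matrix.inv_add_smul_vecMulVec {K m : Type*} [Field K] [Fintype m] [DecidableEq m]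
    {R : Matrix m m K} (hR : IsUnit R.det) (β : K) (u w : m → K)
    (h : 1 + β * (w ⬝ᵥ R⁻¹ *ᵥ u) ≠ 0) :
    (R + β • vecMulVec u w)⁻¹ =
      R⁻¹ - (β / (1 + β * (w ⬝ᵥ R⁻¹ *ᵥ u))) • vecMulVec (R⁻¹ *ᵥ u) (w ᵥ* R⁻¹) := by
  refine inv_eq_right_inv ?_
  set σ := w ⬝ᵥ R⁻¹ *ᵥ u
  set κ := β / (1 + β * σ)
  have hκ : β - κ - β * (κ * σ) = 0 := by simp only [κ]; field_simp; ring
  rw [Matrix.add_mul, Matrix.mul_sub, Matrix.mul_smul, mul_vecMulVec, mulVec_mulVec,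
    mul_nonsing_inv _ hR, one_mulVec, Matrix.smul_mul, vecMulVec_mul,
    vecMul_sub, vecMul_smul, vecMul_vecMulVec]
  calc _ = 1 + (β - κ - β * (κ * σ)) • vecMulVec u (w ᵥ* R⁻¹) := by
        rw [vecMulVec_sub, vecMulVec_smul, vecMulVec_smul]; module
    _ = 1 := by rw [hκ, zero_smul, add_zero]

variable {n : ℕ}

lemma Qnorm_eq_norm {Q : Matrix (Fin n) (Fin n) ℝ} (hQ : Q.PosDef) (u : Fin n → ℝ) :
    Qnorm Q u = @norm _ (Q.toNormedAddCommGroup hQ).toNorm u := by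
  change _ = √(RCLike.re ((Q *ᵥ u) ⬝ᵥ star u))
  simp [Qnorm, dotProduct_comm]

lemma dotProduct_mulVec_eq_inner {Q : Matrix (Fin n) (Fin n) ℝ} (hQ : Q.PosDef) (u w : Fin n → ℝ) :
    u ⬝ᵥ Q *ᵥ w = @inner ℝ _ (Q.toInnerProductSpace hQ.posSemidef).toInner u w := by
  change _ = (Q *ᵥ w) ⬝ᵥ star u
  simp [dotProduct_comm]

theorem exists_nonneg_Qnorm_add_sq_le {Q : Matrix (Fin n) (Fin n) ℝ} (hQ : Q.PosDef) {γ : ℝ}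
    {v y z : Fin n → ℝ} (hz : z ≠ 0) (hy : Qnorm Q y ≤ γ * Qnorm Q z) :
    ∃ a b : ℝ, 0 ≤ a ∧ 0 ≤ b ∧ Qnorm Q (v + (a • (y - z) + b • z)) ^ 2 ≤
      (1 + 3 * γ ^ 2) * (Qnorm Q v ^ 2 - 3 / 4 * (v ⬝ᵥ Q *ᵥ z) ^ 2 / Qnorm Q z ^ 2) := by
  let _ := Q.toNormedAddCommGroup hQ
  let _ := Q.toInnerProductSpace hQ.posSemidef
  simp only [Qnorm_eq_norm hQ, dotProduct_mulVec_eq_inner hQ] at hy ⊢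
  exact exists_nonneg_norm_add_sq_le hz hy

lemma Qnorm_sq {Q : Matrix (Fin n) (Fin n) ℝ} (hQ : Q.PosSemidef) (u : Fin n → ℝ) :
    Qnorm Q u ^ 2 = u ⬝ᵥ Q *ᵥ u :=
  Real.sq_sqrt (by simpa using hQ.dotProduct_mulVec_nonneg u)

lemma Matrix.PosDef.add_smul_vecMulVec {m : Type*} [Fintype m] {R : Matrix m m ℝ}
    (hR : R.PosDef) {β : ℝ} (hβ : 0 ≤ β) (z : m → ℝ) : (R + β • vecMulVec z z).PosDef := by
  have hzz : (vecMulVec z z).PosSemidef := by simpa using posSemidef_vecMulVec_self_star z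
  exact hR.add_posSemidef (hzz.smul hβ)

lemma rescaledRankOne_posDef {R : Matrix (Fin n) (Fin n) ℝ} (hR : R.PosDef) (γ : ℝ)
    (z : Fin n → ℝ) : (rescaledRankOne R γ z).PosDef :=
  (hR.add_smul_vecMulVec (by positivity) z).smul (by positivity)

lemma Matrix.IsSymm.dotProduct_mulVec_comm {α m : Type*} [CommSemiring α] [Fintype m]
    {Q : Matrix m m α} (hQ : Q.IsSymm) (u w : m → α) :
    u ⬝ᵥ Q *ᵥ w = w ⬝ᵥ Q *ᵥ u := by
  rw [dotProduct_mulVec, ← mulVec_transpose, hQ.eq, dotProduct_comm]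

lemma Qnorm_rescaledRankOne_inv {R : Matrix (Fin n) (Fin n) ℝ} (hR : R.PosDef) (γ : ℝ)
    {z : Fin n → ℝ} (hz : z ≠ 0) (v : Fin n → ℝ) :
    Qnorm (rescaledRankOne R γ z)⁻¹ v = √((1 + 3 * γ ^ 2) *
      (Qnorm R⁻¹ v ^ 2 - 3 / 4 * (v ⬝ᵥ R⁻¹ *ᵥ z) ^ 2 / Qnorm R⁻¹ z ^ 2)) := by
  have hQ : R⁻¹.IsSymm := isHermitian_iff_isSymm.1 hR.inv.isHermitian
  have hZ : 0 < Qnorm R⁻¹ z ^ 2 := by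
    rw [Qnorm_sq hR.inv.posSemidef]; simpa using hR.inv.dotProduct_mulVec_pos hz
  set Z := Qnorm R⁻¹ z ^ 2 with hZdef
  have hc : (1 + 3 * γ ^ 2 : ℝ) ≠ 0 := by positivity
  have hM := (hR.add_smul_vecMulVec (β := 3 / Z) (by positivity) z).det_pos.ne'.isUnit
  have hσ : 1 + 3 / Z * (z ⬝ᵥ R⁻¹ *ᵥ z) ≠ 0 := by
    rw [← Qnorm_sq hR.inv.posSemidef, ← hZdef]; field_simp; norm_num
  have hinv : (rescaledRankOne R γ z)⁻¹ = (1 + 3 * γ ^ 2) • (R + (3 / Z) • vecMulVec z z)⁻¹ := by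
    have := inv_smul' _ (Units.mk0 _ (inv_ne_zero hc)) hM
    rwa [Units.smul_def, Units.smul_def, Units.val_inv_eq_inv_val, Units.val_mk0, inv_inv] at this
  rw [hinv, inv_add_smul_vecMulVec hR.det_pos.ne'.isUnit _ _ _ hσ, Qnorm,
    Qnorm_sq hR.inv.posSemidef, ← Qnorm_sq hR.inv.posSemidef z, ← hZdef]
  congr 1
  simp only [smul_mulVec, sub_mulVec, vecMulVec_mulVec, op_smul_eq_smul, dotProduct_smul,
    dotProduct_sub, smul_eq_mul, ← dotProduct_mulVec, hQ.dotProduct_mulVec_comm z v]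
  field_simp
  ring

lemma exists_nonneg_mulVec_eq {m ι : Type*} [Fintype ι] (A : Matrix m ι ℝ) {x N : ι → ℝ}
    (hx : ∀ i, 0 ≤ x i) (hN : ∀ i, 0 ≤ N i) (I : Finset ι) {a b : ℝ} (ha : 0 ≤ a) (hb : 0 ≤ b) :
    ∃ μ : ι → ℝ, (∀ i, 0 ≤ μ i) ∧ A *ᵥ μ =
      a • ((fun j => ∑ i, x i * A j i / N i) - fun j => ∑ i ∈ I, x i * A j i / N i) +
        b • fun j => ∑ i ∈ I, x i * A j i / N i := by
  classical
  refine ⟨fun i => (if i ∈ I then b else a) * (x i / N i),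
    fun i => mul_nonneg (by split_ifs <;> assumption) (div_nonneg (hx i) (hN i)), ?_⟩
  ext j
  have hI (f : ι → ℝ) : ∑ i ∈ I, f i = ∑ i, if i ∈ I then f i else 0 := by
    rw [Finset.sum_ite_mem, Finset.univ_inter]
  simp only [mulVec, dotProduct, Pi.add_apply, Pi.smul_apply, Pi.sub_apply, smul_eq_mul, hI,
    ← Finset.sum_sub_distrib, Finset.mul_sum, ← Finset.sum_add_distrib]
  refine Finset.sum_congr rfl fun i _ => ?_
  split_ifs <;> ring

theorem pullback_rank_one_general {n p : ℕ}
    (A : Matrix (Fin n) (Fin p) ℝ)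
    (R : Matrix (Fin n) (Fin n) ℝ) (hR : R.PosDef)
    (x : Fin p → ℝ) (hx : ∀ i, 0 ≤ x i)
    (I : Finset (Fin p)) (γ : ℝ)
    (hz : (fun j => ∑ i ∈ I, x i * A j i / Qnorm R⁻¹ (fun j' => A j' i)) ≠
      (0 : Fin n → ℝ))
    (hyz : Qnorm R⁻¹ (fun j => ∑ i, x i * A j i / Qnorm R⁻¹ (fun j' => A j' i)) ≤
      γ * Qnorm R⁻¹
        (fun j => ∑ i ∈ I, x i * A j i / Qnorm R⁻¹ (fun j' => A j' i))) :
    (rescaledRankOne R γ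
      (fun j => ∑ i ∈ I, x i * A j i / Qnorm R⁻¹ (fun j' => A j' i))).PosDef ∧
    ∀ v : Fin n → ℝ, ∃ μ : Fin p → ℝ, (∀ i, 0 ≤ μ i) ∧
      Qnorm R⁻¹ (v + A.mulVec μ) ≤
        Qnorm (rescaledRankOne R γ
          (fun j => ∑ i ∈ I, x i * A j i / Qnorm R⁻¹ (fun j' => A j' i)))⁻¹ v := by
  set z : Fin n → ℝ := fun j => ∑ i ∈ I, x i * A j i / Qnorm R⁻¹ (fun j' => A j' i)
  refine ⟨rescaledRankOne_posDef hR γ z, fun v => ?_⟩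
  obtain ⟨a, b, ha, hb, hab⟩ := exists_nonneg_Qnorm_add_sq_le hR.inv (v := v) hz hyz
  obtain ⟨μ, hμ, hAμ⟩ :=
    exists_nonneg_mulVec_eq A hx (fun i => Real.sqrt_nonneg _) I ha hb
  refine ⟨μ, hμ, ?_⟩
  rw [hAμ, Qnorm_rescaledRankOne_inv hR γ hz]
  exact Real.le_sqrt_of_sq_le hab

/-- The rank-1 pull-back lemma: if `y = ∑_{i} x_i a_i/‖a_i‖_Q` and
`z = ∑_{i ∈ I} x_i a_i/‖a_i‖_Q` satisfy `z ≠ 0` and `‖y‖_Q ≤ γ ‖z‖_Q`, then `R'`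
is symmetric positive definite, and for every `v ∈ ℝⁿ` there exists `μ ≥ 0` with
`‖v + Aμ‖_Q ≤ ‖v‖_{Q'}`, where `Q' = (R')⁻¹`. -/
theorem pullback_rank_one {n p : ℕ}
    (A : Matrix (Fin n) (Fin p) ℝ)
    (hA : ∀ i : Fin p, (fun j => A j i) ≠ (0 : Fin n → ℝ))
    (R : Matrix (Fin n) (Fin n) ℝ) (hR : R.PosDef)
    (x : Fin p → ℝ) (hx : ∀ i, 0 ≤ x i)
    (I : Finset (Fin p)) (γ : ℝ) (hγ : 0 < γ)
    (hz : (fun j => ∑ i ∈ I, x i * A j i / Qnorm R⁻¹ (fun j' => A j' i)) ≠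
      (0 : Fin n → ℝ))
    (hyz : Qnorm R⁻¹ (fun j => ∑ i, x i * A j i / Qnorm R⁻¹ (fun j' => A j' i)) ≤
      γ * Qnorm R⁻¹
        (fun j => ∑ i ∈ I, x i * A j i / Qnorm R⁻¹ (fun j' => A j' i))) :
    (rescaledRankOne R γ
      (fun j => ∑ i ∈ I, x i * A j i / Qnorm R⁻¹ (fun j' => A j' i))).PosDef ∧
    ∀ v : Fin n → ℝ, ∃ μ : Fin p → ℝ, (∀ i, 0 ≤ μ i) ∧
      Qnorm R⁻¹ (v + A.mulVec μ) ≤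
        Qnorm (rescaledRankOne R γ
          (fun j => ∑ i ∈ I, x i * A j i / Qnorm R⁻¹ (fun j' => A j' i)))⁻¹ v :=
  pullback_rank_one_general A R hR x hx I γ hz hyz
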